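/- If ε_R^* < 1/3, then π_R(μ_R) ≤ (1/2)·√(ε_R^*/(1 − ε_R^*)) + φ_R^*·T_R^*, where the initial distribution is the restricted ensemble ν = μ_R. -/

import Mathlib

open Finset

noncomputable section

/-- Irreducibility of a finite nonnegative matrix: any state reaches any other. -/
def Irred {n : Type*} [Fintype n] [DecidableEq n] (P : Matrix n n ℝ) : Prop :=
  ∀ x y, ∃ k : ℕ, 0 < (P ^ k) x y

/-- The restricted ensemble `μ_R(x) = μ(x)/μ(R)` (as a function on all of `X`). -/
def muR {X : Type*} [Fintype X] (μ : X → ℝ) (R : Finset X) (x : X) : ℝ :=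
  μ x / ∑ y ∈ R, μ y

/-- Escape probability `e_R(x) = Σ_{y∉R} p(x,y)`. -/
def escR {X : Type*} [Fintype X] [DecidableEq X] (p : Matrix X X ℝ) (R : Finset X)
    (x : X) : ℝ := ∑ y ∈ Rᶜ, p x y

/-- The reflected kernel `p_R` on `R`. -/
def pRefl {X : Type*} [Fintype X] [DecidableEq X] (p : Matrix X X ℝ) (R : Finset X) :
    Matrix R R ℝ :=
  fun x y => if (x : X) = (y : X) then p x x + escR p R x else p x y

/-- The sub-Markovian killed kernel `p_R^*` on `R`. -/
def pKill {X : Type*} [Fintype X] (p : Matrix X X ℝ) (R : Finset X) : Matrix R R ℝ :=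
  fun x y => p x y

/-- Mean of `f` with respect to the weight `μ` on a finite type. -/
def meanOf {n : Type*} [Fintype n] (μ : n → ℝ) (f : n → ℝ) : ℝ := ∑ x, μ x * f x

/-- Scalar product `⟨f,g⟩` with respect to the weight `μ` on a finite type. -/
def innOf {n : Type*} [Fintype n] (μ : n → ℝ) (f g : n → ℝ) : ℝ := ∑ x, μ x * f x * g x

/-- Variance of `f` with respect to the weight `μ` on a finite type. -/
def varOf {n : Type*} [Fintype n] (μ : n → ℝ) (f : n → ℝ) : ℝ :=
  ∑ x, μ x * (f x - meanOf μ f) ^ 2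

/-- Dirichlet form of the kernel `P` reversible w.r.t. `μ`. -/
def dirOf {n : Type*} [Fintype n] (P : Matrix n n ℝ) (μ : n → ℝ) (f : n → ℝ) : ℝ :=
  (1 / 2) * ∑ x, ∑ y, μ x * P x y * (f x - f y) ^ 2

/-- Spectral gap of the kernel `P` reversible w.r.t. `μ`:
`min { D(f)/Var_μ(f) : Var_μ(f) ≠ 0 }`. -/
def gapOf {n : Type*} [Fintype n] (P : Matrix n n ℝ) (μ : n → ℝ) : ℝ :=
  sInf {r : ℝ | ∃ f : n → ℝ, varOf μ f ≠ 0 ∧ r = dirOf P μ f / varOf μ f}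

/-- Spectral gap `γ_R` of the reflected process on `R`. -/
def gapR {X : Type*} [Fintype X] [DecidableEq X] (p : Matrix X X ℝ) (μ : X → ℝ)
    (R : Finset X) : ℝ :=
  gapOf (pRefl p R) (fun x : R => muR μ R x)

/-- The semigroup `exp(t(P − I))` of the continuous-time chain with jump kernel `P`. -/
def heatK {n : Type*} [Fintype n] [DecidableEq n] (P : Matrix n n ℝ) (t : ℝ) :
    Matrix n n ℝ :=
  NormedSpace.exp (t • (P - 1))

/-- `T_{δ,R}^*` as a function of `γ_R`, `ζ_R^*`, `ε_R^*` and `δ`. -/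
def Tmix (γ ζ ε δ : ℝ) : ℝ :=
  (1 / γ) * Real.log (2 / (δ * (1 - δ) * ζ)) *
    ((1 + Real.sqrt (ε / (1 - ε))) * ((1 - ε) / (1 - 3 * ε)))

/-- `ζ_R^* = min_{x∈R} μ_R(x)·h_R^*(x)²` where `h_R^* = μ_R^*/μ_R`. -/
def zetaQS {X : Type*} [Fintype X] (μ : X → ℝ) (R : Finset X) (μstar : R → ℝ) : ℝ :=
  sInf {r : ℝ | ∃ x : R, r = muR μ R x * (μstar x / muR μ R x) ^ 2}

/-- Survival probability `P_ν(τ_{X∖R} > t)` of the continuous-time chain started from `ν`. -/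
def survP {X : Type*} [Fintype X] [DecidableEq X] (p : Matrix X X ℝ) (R : Finset X)
    (ν : R → ℝ) (t : ℝ) : ℝ :=
  ∑ x : R, ∑ y : R, ν x * heatK (pKill p R) t x y

/-- `T_R^* = T_{δ,R}^*` with `δ = ε_R^*`. -/
def TstarQS {X : Type*} [Fintype X] [DecidableEq X] (p : Matrix X X ℝ) (μ : X → ℝ)
    (R : Finset X) (φstar : ℝ) (μstar : R → ℝ) : ℝ :=
  Tmix (gapR p μ R) (zetaQS μ R μstar) (φstar / gapR p μ R) (φstar / gapR p μ R)

/-- `π_R(ν) = P_ν(τ_{X∖R} ≤ T_R^*) = 1 − P_ν(τ_{X∖R} > T_R^*)`. -/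
def piQS {X : Type*} [Fintype X] [DecidableEq X] (p : Matrix X X ℝ) (μ : X → ℝ)
    (R : Finset X) (φstar : ℝ) (μstar : R → ℝ) (ν : R → ℝ) : ℝ :=
  1 - survP p R ν (TstarQS p μ R φstar μstar)

/-! Let `h = μ_R^*/μ_R`. By reversibility the quasi-stationarity of `μ_R^*` says that `h` is a
right eigenfunction, `p_R^* h = (1 - φ_R^*) h`, so the killed semigroup `K_t = exp(t(p_R^* - I))`
satisfies `K_t h = e^{-φ_R^* t} h`. As `K_t` is self-adjoint and positive semidefinite in
`L²(μ_R)`, splitting `1 = c h + w` with `w ⊥ h` gives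
`P_{μ_R}(τ > t) = ⟨1, K_t 1⟩ ≥ e^{-φ_R^* t} / ‖h‖²`. Since `p_R ≥ p_R^*` entrywise,
`D_R(h) ≤ ‖h‖² - ⟨h, p_R^* h⟩ = φ_R^* ‖h‖²`, and the Poincaré inequality together with
`‖h‖² = 1 + Var(h)` gives `Var(h) ≤ ε/(1 - ε)`. It remains to note that
`1 - e^{-x}/(1 + V) ≤ x + √V/2` for `x, V ≥ 0`. -/

section innOf

open Matrix

variable {n : Type*} [Fintype n] {m : n → ℝ}

theorem innOf_add_left (f₁ f₂ g : n → ℝ) :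
    innOf m (f₁ + f₂) g = innOf m f₁ g + innOf m f₂ g := by
  simp only [innOf, Pi.add_apply, ← Finset.sum_add_distrib]; congr 1; ext; ring

theorem innOf_add_right (f g₁ g₂ : n → ℝ) :
    innOf m f (g₁ + g₂) = innOf m f g₁ + innOf m f g₂ := by
  simp only [innOf, Pi.add_apply, ← Finset.sum_add_distrib]; congr 1; ext; ring

theorem innOf_smul_left (c : ℝ) (f g : n → ℝ) : innOf m (c • f) g = c * innOf m f g := by
  simp only [innOf, Pi.smul_apply, smul_eq_mul, Finset.mul_sum]; congr 1; ext; ring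

theorem innOf_smul_right (c : ℝ) (f g : n → ℝ) : innOf m f (c • g) = c * innOf m f g := by
  simp only [innOf, Pi.smul_apply, smul_eq_mul, Finset.mul_sum]; congr 1; ext; ring

theorem innOf_self_nonneg (hm : ∀ x, 0 ≤ m x) (f : n → ℝ) : 0 ≤ innOf m f f :=
  Finset.sum_nonneg fun x _ => by rw [mul_assoc]; exact mul_nonneg (hm x) (mul_self_nonneg _)

theorem innOf_self_eq_varOf_add_sq (hm : ∑ x, m x = 1) (f : n → ℝ) :
    innOf m f f = varOf m f + meanOf m f ^ 2 := by
  have hexpand : ∀ x, m x * (f x - meanOf m f) ^ 2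
      = m x * f x * f x - 2 * meanOf m f * (m x * f x) + meanOf m f ^ 2 * m x := fun x => by ring
  simp only [varOf, hexpand, Finset.sum_add_distrib, Finset.sum_sub_distrib, ← Finset.mul_sum, hm]
  simp only [innOf, meanOf]
  ring

theorem innOf_mulVec_le_of_le {q P : Matrix n n ℝ} (hm : ∀ x, 0 ≤ m x) {f : n → ℝ}
    (hf : ∀ x, 0 ≤ f x) (hqP : ∀ x y, q x y ≤ P x y) : innOf m f (q *ᵥ f) ≤ innOf m f (P *ᵥ f) :=
  Finset.sum_le_sum fun x _ => mul_le_mul_of_nonneg_left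
    (Finset.sum_le_sum fun y _ => mul_le_mul_of_nonneg_right (hqP x y) (hf y))
    (mul_nonneg (hm x) (hf x))

end innOf

section spectralGap

variable {n : Type*} [Fintype n] {m : n → ℝ} {P : Matrix n n ℝ}

theorem varOf_nonneg (hm : ∀ x, 0 ≤ m x) (f : n → ℝ) : 0 ≤ varOf m f :=
  Finset.sum_nonneg fun x _ => mul_nonneg (hm x) (sq_nonneg _)

theorem dirOf_nonneg (hm : ∀ x, 0 ≤ m x) (hP : ∀ x y, 0 ≤ P x y) (f : n → ℝ) :
    0 ≤ dirOf P m f :=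
  mul_nonneg (by norm_num) <| Finset.sum_nonneg fun x _ => Finset.sum_nonneg fun y _ =>
    mul_nonneg (mul_nonneg (hm x) (hP x y)) (sq_nonneg _)

theorem gapOf_mul_varOf_le_dirOf (hm : ∀ x, 0 ≤ m x) (hP : ∀ x y, 0 ≤ P x y) (f : n → ℝ) :
    gapOf P m * varOf m f ≤ dirOf P m f := by
  rcases (varOf_nonneg hm f).eq_or_lt' with hv | hv
  · rw [hv, mul_zero]
    exact dirOf_nonneg hm hP f
  · have hbdd : BddBelow {r | ∃ g : n → ℝ, varOf m g ≠ 0 ∧ r = dirOf P m g / varOf m g} :=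
      ⟨0, by rintro _ ⟨g, -, rfl⟩; exact div_nonneg (dirOf_nonneg hm hP g) (varOf_nonneg hm g)⟩
    rw [← le_div_iff₀ hv]
    exact csInf_le hbdd ⟨f, hv.ne', rfl⟩

theorem meanOf_affine (hm : ∑ x, m x = 1) (f : n → ℝ) (a b : ℝ) :
    meanOf m (fun x => a * (f x - b)) = a * (meanOf m f - b) := by
  have hterm : ∀ x, m x * (a * (f x - b)) = a * (m x * f x) - a * b * m x := fun x => by ring
  simp only [meanOf, hterm, Finset.sum_sub_distrib, ← Finset.mul_sum, hm]
  ring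

theorem varOf_affine (hm : ∑ x, m x = 1) (f : n → ℝ) (a b : ℝ) :
    varOf m (fun x => a * (f x - b)) = a ^ 2 * varOf m f := by
  simp only [varOf, meanOf_affine hm, Finset.mul_sum]
  exact Finset.sum_congr rfl fun x _ => by ring

theorem dirOf_affine (f : n → ℝ) (a b : ℝ) :
    dirOf P m (fun x => a * (f x - b)) = a ^ 2 * dirOf P m f := by
  simp only [dirOf, Finset.mul_sum]
  exact Finset.sum_congr rfl fun x _ => Finset.sum_congr rfl fun y _ => by ring

theorem apply_eq_of_dirOf_eq_zero [DecidableEq n] (hm : ∀ x, 0 < m x) (hP : ∀ x y, 0 ≤ P x y)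
    (hirr : Irred P) {g : n → ℝ} (hg : dirOf P m g = 0) (x y : n) : g x = g y := by
  have hterm : ∀ x y, m x * P x y * (g x - g y) ^ 2 = 0 := by
    have hnonneg : ∀ x y, 0 ≤ m x * P x y * (g x - g y) ^ 2 := fun x y =>
      mul_nonneg (mul_nonneg (hm x).le (hP x y)) (sq_nonneg _)
    have hsum : ∑ x, ∑ y, m x * P x y * (g x - g y) ^ 2 = 0 := by
      simpa [dirOf] using hg
    intro x y
    rw [Finset.sum_eq_zero_iff_of_nonneg fun x _ => Finset.sum_nonneg fun y _ => hnonneg x y]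
      at hsum
    exact (Finset.sum_eq_zero_iff_of_nonneg fun y _ => hnonneg x y).mp
      (hsum x (Finset.mem_univ x)) y (Finset.mem_univ y)
  have hstep : ∀ x y, 0 < P x y → g x = g y := fun x y hxy => by
    have := hterm x y
    rw [mul_eq_zero, or_iff_right (mul_pos (hm x) hxy).ne', sq_eq_zero_iff, sub_eq_zero] at this
    exact this
  have hpath : ∀ k : ℕ, ∀ x y, 0 < (P ^ k) x y → g x = g y := by
    intro k
    induction k with
    | zero =>
      intro x y hxy
      rcases eq_or_ne x y with rfl | hne
      · rfl
      · simp [Matrix.one_apply_ne hne] at hxy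
    | succ k ih =>
      intro x y hxy
      rw [pow_succ', Matrix.mul_apply] at hxy
      obtain ⟨z, -, hz⟩ := Finset.exists_lt_of_sum_lt (s := Finset.univ) (f := 0)
        (g := fun z => P x z * (P ^ k) z y) (by simpa using hxy)
      obtain ⟨hxz, hzy⟩ := (pos_and_pos_or_neg_and_neg_of_mul_pos hz).resolve_right
        fun h => (hP x z).not_gt h.1
      exact (hstep x z hxz).trans (ih z y hzy)
  obtain ⟨k, hk⟩ := hirr x y
  exact hpath k x y hk

theorem exists_varOf_ne_zero [DecidableEq n] [Nontrivial n] (hm : ∀ x, 0 < m x) :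
    ∃ f : n → ℝ, varOf m f ≠ 0 := by
  obtain ⟨a, b, hab⟩ := exists_pair_ne n
  set f : n → ℝ := fun x => if x = a then 1 else 0
  have hmean : meanOf m f = m a := by simp [f, meanOf]
  have hb : m b * (f b - meanOf m f) ^ 2 ≤ varOf m f :=
    Finset.single_le_sum (f := fun x => m x * (f x - meanOf m f) ^ 2)
      (fun x _ => mul_nonneg (hm x).le (sq_nonneg _)) (Finset.mem_univ b)
  have hfb : f b = 0 := if_neg hab.symm
  rw [hfb, hmean, zero_sub, neg_sq] at hb
  exact ⟨f, (lt_of_lt_of_le (mul_pos (hm b) (pow_pos (hm a) 2)) hb).ne'⟩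

theorem dirOf_pos_of_meanOf_eq_zero [DecidableEq n] (hm : ∀ x, 0 < m x) (hm1 : ∑ x, m x = 1)
    (hP : ∀ x y, 0 ≤ P x y) (hirr : Irred P) {g : n → ℝ} (hmean : meanOf m g = 0) (hg : g ≠ 0) :
    0 < dirOf P m g := by
  refine (dirOf_nonneg (fun x => (hm x).le) hP g).lt_of_ne fun hD => hg (funext fun x => ?_)
  have hconst := apply_eq_of_dirOf_eq_zero hm hP hirr hD.symm
  rw [Pi.zero_apply, ← hmean, meanOf, Finset.sum_congr rfl fun y _ => by rw [hconst y x],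
    ← Finset.sum_mul, hm1, one_mul]

theorem exists_pos_mul_varOf_le_dirOf [DecidableEq n] (hm : ∀ x, 0 < m x) (hm1 : ∑ x, m x = 1)
    (hP : ∀ x y, 0 ≤ P x y) (hirr : Irred P) :
    ∃ c > 0, ∀ f : n → ℝ, c * varOf m f ≤ dirOf P m f := by
  -- `D/Var` is invariant under `f ↦ a (f - b)`, so it suffices to bound `D` below on the compact
  -- set of mean-zero functions of sup norm one, where `Var ≤ 1`.
  set S := {g : n → ℝ | meanOf m g = 0} ∩ Metric.sphere 0 1
  have hS : IsCompact S :=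
    (isCompact_sphere 0 1).inter_left (isClosed_eq (by unfold meanOf; fun_prop) continuous_const)
  have hpos : ∀ g ∈ S, 0 < dirOf P m g := by
    rintro g ⟨hmean : meanOf m g = 0, hnorm⟩
    exact dirOf_pos_of_meanOf_eq_zero hm hm1 hP hirr hmean (by rintro rfl; simp at hnorm)
  obtain ⟨c, hc, hcS⟩ := hS.exists_forall_le' (by unfold dirOf; fun_prop) hpos
  refine ⟨c, hc, fun f => ?_⟩
  set u : n → ℝ := fun x => f x - meanOf m f
  rcases eq_or_ne u 0 with hu | hu
  · have hvar : varOf m f = 0 :=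
      Finset.sum_eq_zero fun x _ => by simp [show f x - meanOf m f = 0 from congrFun hu x]
    rw [hvar, mul_zero]
    exact dirOf_nonneg (fun x => (hm x).le) hP f
  set a := ‖u‖⁻¹
  have ha : 0 < a := inv_pos.mpr (norm_pos_iff.mpr hu)
  set g : n → ℝ := fun x => a * (f x - meanOf m f)
  have hgS : g ∈ S := by
    refine ⟨by simp [g, meanOf_affine hm1], ?_⟩
    have hgu : g = a • u := funext fun x => by simp [g, u]
    rw [mem_sphere_zero_iff_norm, hgu, norm_smul, Real.norm_of_nonneg ha.le,
      inv_mul_cancel₀ (norm_ne_zero_iff.mpr hu)]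
  have hvar_le : varOf m g ≤ 1 := by
    rw [varOf, ← hm1]
    refine Finset.sum_le_sum fun x _ => mul_le_of_le_one_right (hm x).le ?_
    rw [hgS.1, sub_zero, sq_le_one_iff_abs_le_one, ← Real.norm_eq_abs,
      ← mem_sphere_zero_iff_norm.mp hgS.2]
    exact norm_le_pi_norm g x
  have hscaled : a ^ 2 * (c * varOf m f) ≤ a ^ 2 * dirOf P m f := by
    rw [← dirOf_affine, mul_left_comm, ← varOf_affine hm1]
    calc c * varOf m g ≤ c := mul_le_of_le_one_right hc.le hvar_le
      _ ≤ dirOf P m g := hcS g hgS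
  exact le_of_mul_le_mul_left hscaled (by positivity)

theorem gapOf_pos [DecidableEq n] [Nontrivial n] (hm : ∀ x, 0 < m x) (hm1 : ∑ x, m x = 1)
    (hP : ∀ x y, 0 ≤ P x y) (hirr : Irred P) : 0 < gapOf P m := by
  obtain ⟨c, hc, hcf⟩ := exists_pos_mul_varOf_le_dirOf hm hm1 hP hirr
  obtain ⟨f, hf⟩ := exists_varOf_ne_zero hm
  refine hc.trans_le (le_csInf ⟨_, f, hf, rfl⟩ ?_)
  rintro _ ⟨g, hg, rfl⟩
  rw [le_div_iff₀ ((varOf_nonneg (fun x => (hm x).le) g).lt_of_ne' hg)]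
  exact hcf g

end spectralGap

namespace Matrix

variable {n : Type*}

def IsReversible (m : n → ℝ) (M : Matrix n n ℝ) : Prop :=
  ∀ x y, m x * M x y = m y * M y x

def reversibleSubmodule (m : n → ℝ) : Submodule ℝ (Matrix n n ℝ) where
  carrier := {M | IsReversible m M}
  add_mem' {A B} hA hB x y := by simp only [add_apply]; linear_combination hA x y + hB x y
  zero_mem' x y := by simp
  smul_mem' c A hA x y := by simp only [smul_apply, smul_eq_mul]; linear_combination c * hA x y

section exp

variable [Fintype n] [DecidableEq n]

-- `exp` does not depend on a norm, but the summability of its series is stated for normed algebras.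
open scoped Norms.Operator in
theorem exp_mulVec_eq_smul {M : Matrix n n ℝ}
    {v : n → ℝ} {c : ℝ} (hv : M *ᵥ v = c • v) :
    NormedSpace.exp M *ᵥ v = Real.exp c • v := by
  have hpow : ∀ k : ℕ, M ^ k *ᵥ v = c ^ k • v := by
    intro k
    induction k with
    | zero => simp
    | succ k ih => rw [pow_succ, ← mulVec_mulVec, hv, mulVec_smul, ih, smul_smul, pow_succ']
  have hM := (NormedSpace.exp_series_hasSum_exp' (𝕂 := ℝ) M).map
    (mulVec.addMonoidHomLeft v) (continuous_id.matrix_mulVec continuous_const)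
  rw [Real.exp_eq_exp_ℝ]
  refine hM.unique ?_
  convert (NormedSpace.exp_series_hasSum_exp' (𝕂 := ℝ) c).smul_const v using 2 with k
  simp [mulVec.addMonoidHomLeft, smul_mulVec, hpow, smul_smul]

theorem heatK_mulVec_eq_smul {P : Matrix n n ℝ}
    {v : n → ℝ} {c : ℝ} (hv : P *ᵥ v = c • v) (t : ℝ) :
    heatK P t *ᵥ v = Real.exp (t * (c - 1)) • v :=
  exp_mulVec_eq_smul (by rw [smul_mulVec, sub_mulVec, hv, one_mulVec]; module)

end exp

namespace IsReversible

variable {m : n → ℝ} {M q : Matrix n n ℝ}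

theorem one [DecidableEq n] (m : n → ℝ) : IsReversible m (1 : Matrix n n ℝ) := by
  intro x y
  rcases eq_or_ne x y with rfl | hxy
  · rfl
  · simp [one_apply_ne hxy, one_apply_ne hxy.symm]

theorem sub {N : Matrix n n ℝ} (hM : IsReversible m M) (hN : IsReversible m N) :
    IsReversible m (M - N) :=
  (reversibleSubmodule m).sub_mem hM hN

theorem smul (c : ℝ) (hM : IsReversible m M) : IsReversible m (c • M) :=
  (reversibleSubmodule m).smul_mem c hM

variable [Fintype n]

theorem pow [DecidableEq n] (hM : IsReversible m M) (k : ℕ) : IsReversible m (M ^ k) := by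
  induction k with
  | zero => exact one m
  | succ k ih =>
    intro x y
    rw [pow_succ, mul_apply, ← Commute.self_pow M k |>.eq, mul_apply, Finset.mul_sum,
      Finset.mul_sum]
    refine Finset.sum_congr rfl fun z _ => ?_
    linear_combination M z y * ih x z + (M ^ k) z x * hM z y

theorem exp [DecidableEq n] (hM : IsReversible m M) : IsReversible m (NormedSpace.exp M) := by
  have hclosed : IsClosed (reversibleSubmodule m : Set (Matrix n n ℝ)) :=
    Submodule.closed_of_finiteDimensional _
  rw [NormedSpace.exp_eq_tsum ℝ]
  exact tsum_mem hclosed fun k => (reversibleSubmodule m).smul_mem _ (hM.pow k)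

open Finset in
theorem innOf_mulVec_comm {K : Matrix n n ℝ} (hK : IsReversible m K) (f g : n → ℝ) :
    innOf m f (K *ᵥ g) = innOf m g (K *ᵥ f) := by
  simp only [innOf, mulVec, dotProduct, mul_sum]
  rw [sum_comm]
  refine sum_congr rfl fun x _ => sum_congr rfl fun y _ => ?_
  linear_combination (f y * g x) * hK y x

theorem innOf_exp_mulVec_self_nonneg [DecidableEq n] (hm : ∀ x, 0 ≤ m x)
    (hM : IsReversible m M) (f : n → ℝ) : 0 ≤ innOf m f (NormedSpace.exp M *ᵥ f) := by
  set B := NormedSpace.exp ((1 / 2 : ℝ) • M)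
  have hsplit : NormedSpace.exp M = B * B := by
    rw [← exp_add_of_commute _ _ (Commute.refl _)]; congr 1; module
  rw [hsplit, ← mulVec_mulVec, (hM.smul _).exp.innOf_mulVec_comm]
  exact innOf_self_nonneg hm _

theorem heatK [DecidableEq n] {P : Matrix n n ℝ} (hP : IsReversible m P) (t : ℝ) :
    IsReversible m (heatK P t) :=
  ((hP.sub (one m)).smul t).exp

theorem innOf_heatK_mulVec_self_nonneg [DecidableEq n] {P : Matrix n n ℝ} (hm : ∀ x, 0 ≤ m x)
    (hP : IsReversible m P) (t : ℝ) (f : n → ℝ) : 0 ≤ innOf m f (_root_.heatK P t *ᵥ f) :=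
  ((hP.sub (one m)).smul t).innOf_exp_mulVec_self_nonneg hm f

theorem mul_innOf_sq_div_le {K : Matrix n n ℝ} (hK : IsReversible m K)
    (hpsd : ∀ w, 0 ≤ innOf m w (K *ᵥ w)) {v : n → ℝ} {κ : ℝ} (hv : K *ᵥ v = κ • v)
    (hvv : innOf m v v ≠ 0) (f : n → ℝ) :
    κ * innOf m f v ^ 2 / innOf m v v ≤ innOf m f (K *ᵥ f) := by
  set a := innOf m f v / innOf m v v
  set w := f - a • v
  have hf : f = a • v + w := (add_sub_cancel _ _).symm
  have hwv : innOf m w v = 0 := by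
    have : innOf m f v = a * innOf m v v + innOf m w v := by
      conv_lhs => rw [hf]
      rw [innOf_add_left, innOf_smul_left]
    rw [div_mul_cancel₀ _ hvv] at this
    linarith
  have hvKw : innOf m v (K *ᵥ w) = 0 := by
    rw [hK.innOf_mulVec_comm, hv, innOf_smul_right, hwv, mul_zero]
  have hexpand : innOf m f (K *ᵥ f) = κ * a ^ 2 * innOf m v v + innOf m w (K *ᵥ w) := by
    conv_lhs => rw [hf]
    simp only [mulVec_add, mulVec_smul, hv, innOf_add_left, innOf_add_right, innOf_smul_left,
      innOf_smul_right, hvKw, hwv]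
    ring
  have hsq : κ * innOf m f v ^ 2 / innOf m v v = κ * a ^ 2 * innOf m v v := by
    simp only [a]
    field_simp
  rw [hexpand, hsq]
  linarith [hpsd w]

theorem dirOf_eq_innOf_sub {P : Matrix n n ℝ} (hP : IsReversible m P)
    (hrow : ∀ x, ∑ y, P x y = 1) (f : n → ℝ) :
    dirOf P m f = innOf m f f - innOf m f (P *ᵥ f) := by
  have hleft : ∑ x, ∑ y, m x * P x y * f x ^ 2 = innOf m f f := by
    refine Finset.sum_congr rfl fun x _ => ?_
    rw [← Finset.sum_mul, ← Finset.mul_sum, hrow]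
    ring
  have hright : ∑ x, ∑ y, m x * P x y * f y ^ 2 = innOf m f f := by
    rw [Finset.sum_comm, ← hleft]
    exact Finset.sum_congr rfl fun y _ => Finset.sum_congr rfl fun x _ => by rw [hP x y]
  have hcross : ∑ x, ∑ y, m x * P x y * (f x * f y) = innOf m f (P *ᵥ f) := by
    simp only [innOf, mulVec, dotProduct, Finset.mul_sum]
    exact Finset.sum_congr rfl fun x _ => Finset.sum_congr rfl fun y _ => by ring
  have hexpand : ∀ x y, m x * P x y * (f x - f y) ^ 2
      = m x * P x y * f x ^ 2 + m x * P x y * f y ^ 2 - 2 * (m x * P x y * (f x * f y)) :=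
    fun x y => by ring
  simp only [dirOf, hexpand, Finset.sum_add_distrib, Finset.sum_sub_distrib, ← Finset.mul_sum,
    hleft, hright, hcross]
  ring

theorem mulVec_div_eq_smul (hm : ∀ x, m x ≠ 0) (hq : IsReversible m q) {ν : n → ℝ} {c : ℝ}
    (hν : ∀ y, ∑ x, ν x * q x y = c * ν y) :
    q *ᵥ (fun x => ν x / m x) = c • fun x => ν x / m x := by
  funext x
  have hterm : ∀ y, q x y * (ν y / m y) = ν y * q y x / m x := fun y => by
    field_simp [hm x, hm y]
    linear_combination ν y * hq x y
  simp only [mulVec, dotProduct, Pi.smul_apply, smul_eq_mul, hterm]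
  rw [← Finset.sum_div, hν x, mul_div_assoc]

theorem gapOf_mul_varOf_le_mul_innOf_self {P : Matrix n n ℝ} (hm : ∀ x, 0 ≤ m x)
    (hP : ∀ x y, 0 ≤ P x y) (hProw : ∀ x, ∑ y, P x y = 1) (hPrev : IsReversible m P)
    (hqP : ∀ x y, q x y ≤ P x y) {h : n → ℝ} (hh : ∀ x, 0 ≤ h x) {φ : ℝ}
    (heig : q *ᵥ h = (1 - φ) • h) :
    gapOf P m * varOf m h ≤ φ * innOf m h h :=
  calc gapOf P m * varOf m h ≤ dirOf P m h := gapOf_mul_varOf_le_dirOf hm hP h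
    _ = innOf m h h - innOf m h (P *ᵥ h) := hPrev.dirOf_eq_innOf_sub hProw h
    _ ≤ innOf m h h - innOf m h (q *ᵥ h) := by gcongr; exact innOf_mulVec_le_of_le hm hh hqP
    _ = φ * innOf m h h := by rw [heig, innOf_smul_right]; ring

theorem varOf_mul_one_sub_le {P : Matrix n n ℝ} (hm : ∀ x, 0 ≤ m x) (hm1 : ∑ x, m x = 1)
    (hP : ∀ x y, 0 ≤ P x y) (hProw : ∀ x, ∑ y, P x y = 1) (hPrev : IsReversible m P)
    (hqP : ∀ x y, q x y ≤ P x y) {h : n → ℝ} (hh : ∀ x, 0 ≤ h x) {φ : ℝ}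
    (heig : q *ᵥ h = (1 - φ) • h) (hmean : meanOf m h = 1) (hgap : 0 < gapOf P m) :
    varOf m h * (1 - φ / gapOf P m) ≤ φ / gapOf P m := by
  have hbound := hPrev.gapOf_mul_varOf_le_mul_innOf_self hm hP hProw hqP hh heig
  rw [innOf_self_eq_varOf_add_sq hm1, hmean] at hbound
  rw [mul_one_sub, sub_le_iff_le_add, mul_div_assoc', ← add_div, le_div_iff₀ hgap]
  linarith

theorem exp_neg_div_le_innOf_heatK_mulVec [DecidableEq n] (hm : ∀ x, 0 ≤ m x)
    (hq : IsReversible m q) {h : n → ℝ} {φ : ℝ} (heig : q *ᵥ h = (1 - φ) • h)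
    (hmean : meanOf m h = 1) (hh : innOf m h h ≠ 0) (t : ℝ) :
    Real.exp (-(φ * t)) / innOf m h h ≤ innOf m 1 (_root_.heatK q t *ᵥ 1) := by
  have key := (hq.heatK t).mul_innOf_sq_div_le (hq.innOf_heatK_mulVec_self_nonneg hm t)
    (heatK_mulVec_eq_smul heig t) hh 1
  rwa [show innOf m 1 h = meanOf m h by simp [innOf, meanOf], hmean, one_pow, mul_one,
    show t * (1 - φ - 1) = -(φ * t) by ring] at key

end IsReversible

end Matrix

theorem Tmix_self_nonneg {γ ζ ε : ℝ} (hγ : 0 ≤ γ) (hε0 : 0 < ε) (hε : ε < 1 / 3) (hζ : 0 < ζ)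
    (hζle : ζ * (1 - ε) ≤ 1) : 0 ≤ Tmix γ ζ ε ε := by
  have hpos : 0 < ε * (1 - ε) * ζ := mul_pos (mul_pos hε0 (by linarith)) hζ
  have hlog : 0 ≤ Real.log (2 / (ε * (1 - ε) * ζ)) :=
    Real.log_nonneg ((one_le_div hpos).mpr (by nlinarith [mul_le_mul_of_nonneg_left hζle hε0.le]))
  have hfrac : 0 ≤ (1 - ε) / (1 - 3 * ε) := div_nonneg (by linarith) (by linarith)
  unfold Tmix
  positivity

theorem one_sub_exp_neg_div_one_add_le {τ V : ℝ} (hτ : 0 ≤ τ) (hV : 0 ≤ V) :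
    1 - Real.exp (-τ) / (1 + V) ≤ √V / 2 + τ := by
  obtain ⟨r, hr, rfl⟩ : ∃ r, 0 ≤ r ∧ V = r ^ 2 := ⟨√V, Real.sqrt_nonneg V, (Real.sq_sqrt hV).symm⟩
  rw [Real.sqrt_sq hr, sub_le_comm, le_div_iff₀ (by positivity)]
  nlinarith [Real.add_one_le_exp (-τ), mul_nonneg hr (sq_nonneg (1 - r)),
    mul_nonneg hτ (sq_nonneg r)]

section restricted

open Matrix

variable {X : Type*} [Fintype X] {p : Matrix X X ℝ} {μ : X → ℝ} {R : Finset X}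

theorem muR_pos (hμ : ∀ x, 0 < μ x) (hR : R.Nonempty) (x : X) : 0 < muR μ R x :=
  div_pos (hμ x) (Finset.sum_pos (fun y _ => hμ y) hR)

theorem sum_muR (hμ : ∀ x, 0 < μ x) (hR : R.Nonempty) : ∑ x : R, muR μ R x = 1 := by
  simp only [muR, ← Finset.sum_div]
  rw [Finset.sum_coe_sort R μ, div_self (Finset.sum_pos (fun y _ => hμ y) hR).ne']

theorem muR_mul_symm (hrev : ∀ x y, μ x * p x y = μ y * p y x) (x y : X) :
    muR μ R x * p x y = muR μ R y * p y x := by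
  simp only [muR, div_mul_eq_mul_div, hrev x y]

theorem isReversible_pKill (hrev : ∀ x y, μ x * p x y = μ y * p y x) :
    Matrix.IsReversible (fun x : R => muR μ R x) (pKill p R) :=
  fun x y => muR_mul_symm hrev x y

variable [DecidableEq X]

theorem escR_nonneg (hp : ∀ x y, 0 ≤ p x y) (x : X) : 0 ≤ escR p R x :=
  Finset.sum_nonneg fun y _ => hp x y

theorem isReversible_pRefl (hrev : ∀ x y, μ x * p x y = μ y * p y x) :
    Matrix.IsReversible (fun x : R => muR μ R x) (pRefl p R) := by
  intro x y
  by_cases hxy : (x : X) = y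
  · rw [Subtype.ext hxy]
  · simp only [pRefl, if_neg hxy, if_neg (Ne.symm hxy), muR_mul_symm hrev]

theorem pKill_le_pRefl (hp : ∀ x y, 0 ≤ p x y) (x y : R) : pKill p R x y ≤ pRefl p R x y := by
  unfold pKill pRefl
  split_ifs with hxy
  · rw [hxy]; exact le_add_of_nonneg_right (escR_nonneg hp y)
  · exact le_rfl

theorem sum_pRefl (hrow : ∀ x, ∑ y, p x y = 1) (x : R) : ∑ y, pRefl p R x y = 1 := by
  have hsplit : ∀ y : R, pRefl p R x y = pKill p R x y + if x = y then escR p R x else 0 := by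
    intro y
    by_cases hxy : x = y
    · subst hxy; simp [pRefl, pKill]
    · simp [pRefl, pKill, hxy]
  rw [Finset.sum_congr rfl fun y _ => hsplit y, Finset.sum_add_distrib, Finset.sum_ite_eq,
    if_pos (Finset.mem_univ x), escR, ← hrow x, ← Finset.sum_add_sum_compl R]
  simp only [pKill]
  rw [Finset.sum_coe_sort R (p x)]

theorem survP_eq_innOf (ν : R → ℝ) (t : ℝ) :
    survP p R ν t = innOf ν 1 (heatK (pKill p R) t *ᵥ 1) := by
  simp [survP, innOf, Matrix.mulVec, dotProduct, Finset.mul_sum]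

end restricted

section quasiStationary

variable {X : Type*} [Fintype X] {μ : X → ℝ} {R : Finset X} {μstar : R → ℝ}

theorem exists_zetaQS_eq [Nonempty R] :
    ∃ x : R, zetaQS μ R μstar = muR μ R x * (μstar x / muR μ R x) ^ 2 := by
  set F : R → ℝ := fun x => muR μ R x * (μstar x / muR μ R x) ^ 2
  have hset : zetaQS μ R μstar = sInf (Set.range F) := by
    rw [zetaQS]; congr 1; ext r; simp [F, eq_comm]
  obtain ⟨x, hx⟩ := (Set.range_nonempty F).csInf_mem (Set.finite_range F)
  exact ⟨x, by rw [hset, ← hx]⟩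

theorem zetaQS_pos (hμ : ∀ x, 0 < μ x) (hR : R.Nonempty) (hμstar : ∀ x, 0 < μstar x) :
    0 < zetaQS μ R μstar := by
  have := hR.to_subtype
  obtain ⟨x, hx⟩ := exists_zetaQS_eq (μ := μ) (μstar := μstar)
  have := muR_pos hμ hR x
  have := hμstar x
  rw [hx]
  positivity

theorem zetaQS_le_innOf (hμ : ∀ x, 0 < μ x) (hR : R.Nonempty) :
    zetaQS μ R μstar ≤ innOf (fun x : R => muR μ R x) (fun x => μstar x / muR μ R x)
      (fun x => μstar x / muR μ R x) := by
  have := hR.to_subtype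
  obtain ⟨x, hx⟩ := exists_zetaQS_eq (μ := μ) (μstar := μstar)
  rw [hx, sq, ← mul_assoc]
  exact Finset.single_le_sum
    (f := fun x : R => muR μ R x * (μstar x / muR μ R x) * (μstar x / muR μ R x))
    (fun y _ => by rw [mul_assoc]; exact mul_nonneg (muR_pos hμ hR y).le (mul_self_nonneg _))
    (Finset.mem_univ x)

end quasiStationary

theorem escape_probability_restricted_ensemble_general
    (X : Type*) [Fintype X] [DecidableEq X]
    (p : Matrix X X ℝ) (μ : X → ℝ) (R : Finset X)
    (hp_nonneg : ∀ x y, 0 ≤ p x y)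
    (hp_row : ∀ x, ∑ y, p x y = 1)
    (hμ_pos : ∀ x, 0 < μ x)
    (hrev : ∀ x y, μ x * p x y = μ y * p y x)
    (hR_ne : R.Nonempty)
    (hR_two : 2 ≤ R.card)
    (hpR_irr : Irred (pRefl p R))
    (φstar : ℝ) (hφ_pos : 0 < φstar)
    (μstar : R → ℝ) (hμstar_pos : ∀ x, 0 < μstar x)
    (hμstar_sum : ∑ x : R, μstar x = 1)
    (hqs : ∀ y : R, ∑ x : R, μstar x * pKill p R x y = (1 - φstar) * μstar y)
    (hε : φstar / gapR p μ R < 1 / 3) :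
    piQS p μ R φstar μstar (fun x : R => muR μ R x)
      ≤ (1 / 2) * Real.sqrt ((φstar / gapR p μ R) / (1 - φstar / gapR p μ R))
        + φstar * TstarQS p μ R φstar μstar := by
  have : Nontrivial R := Fintype.one_lt_card_iff_nontrivial.mp (by rw [Fintype.card_coe]; omega)
  set m : R → ℝ := fun x => muR μ R x
  set h : R → ℝ := fun x => μstar x / m x
  set γ := gapR p μ R
  set ε := φstar / γ
  set T := TstarQS p μ R φstar μstar
  have hm x : 0 < m x := muR_pos hμ_pos hR_ne x
  have hm1 : ∑ x, m x = 1 := sum_muR hμ_pos hR_ne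
  have hP x y : 0 ≤ pRefl p R x y := (hp_nonneg x y).trans (pKill_le_pRefl hp_nonneg x y)
  have hγ : 0 < γ := gapOf_pos hm hm1 hP hpR_irr
  have heig : (pKill p R).mulVec h = (1 - φstar) • h :=
    (isReversible_pKill hrev).mulVec_div_eq_smul (fun x => (hm x).ne') hqs
  have hmean : meanOf m h = 1 := by
    simp only [meanOf, h, mul_div_cancel₀ _ (hm _).ne', hμstar_sum]
  have hnorm : innOf m h h = 1 + varOf m h := by
    rw [innOf_self_eq_varOf_add_sq hm1, hmean, one_pow, add_comm]
  have hV0 : 0 ≤ varOf m h := varOf_nonneg (fun x => (hm x).le) h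
  have hV : varOf m h * (1 - ε) ≤ ε := (isReversible_pRefl hrev).varOf_mul_one_sub_le
    (fun x => (hm x).le) hm1 hP (sum_pRefl hp_row) (pKill_le_pRefl hp_nonneg)
    (fun x => (div_pos (hμstar_pos x) (hm x)).le) heig hmean hγ
  have hT : 0 ≤ T := Tmix_self_nonneg hγ.le (div_pos hφ_pos hγ) hε
    (zetaQS_pos hμ_pos hR_ne hμstar_pos)
    (by nlinarith [zetaQS_le_innOf hμ_pos hR_ne (μstar := μstar)])
  have hsurv : Real.exp (-(φstar * T)) / (1 + varOf m h) ≤ survP p R m T := by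
    rw [← hnorm, survP_eq_innOf]
    exact (isReversible_pKill hrev).exp_neg_div_le_innOf_heatK_mulVec (fun x => (hm x).le) heig
      hmean (by linarith) T
  calc piQS p μ R φstar μstar m = 1 - survP p R m T := rfl
    _ ≤ 1 - Real.exp (-(φstar * T)) / (1 + varOf m h) := by linarith
    _ ≤ √(varOf m h) / 2 + φstar * T := one_sub_exp_neg_div_one_add_le (by positivity) hV0
    _ ≤ 1 / 2 * √(ε / (1 - ε)) + φstar * T := by
      linarith [Real.sqrt_le_sqrt ((le_div_iff₀ (by linarith : 0 < 1 - ε)).mpr hV)]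

/-- Lemma 2.7: the escape probability before `T_R^*`, started from the restricted ensemble. -/
theorem escape_probability_restricted_ensemble
    (X : Type*) [Fintype X] [DecidableEq X]
    (p : Matrix X X ℝ) (μ : X → ℝ) (R : Finset X)
    (hp_nonneg : ∀ x y, 0 ≤ p x y)
    (hp_row : ∀ x, ∑ y, p x y = 1)
    (hp_irr : Irred p)
    (hμ_pos : ∀ x, 0 < μ x)
    (hμ_sum : ∑ x, μ x = 1)
    (hrev : ∀ x y, μ x * p x y = μ y * p y x)
    (hR_ne : R.Nonempty) (hR_proper : R ≠ Finset.univ)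
    (hR_two : 2 ≤ R.card)
    (hpR_irr : Irred (pRefl p R))
    (φstar : ℝ) (hφ_pos : 0 < φstar) (hφ_le : φstar ≤ 1)
    (μstar : R → ℝ) (hμstar_pos : ∀ x, 0 < μstar x)
    (hμstar_sum : ∑ x : R, μstar x = 1)
    (hqs : ∀ y : R, ∑ x : R, μstar x * pKill p R x y = (1 - φstar) * μstar y)
    (hε : φstar / gapR p μ R < 1 / 3) :
    piQS p μ R φstar μstar (fun x : R => muR μ R x)
      ≤ (1 / 2) * Real.sqrt ((φstar / gapR p μ R) / (1 - φstar / gapR p μ R))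
        + φstar * TstarQS p μ R φstar μstar :=
  escape_probability_restricted_ensemble_general X p μ R hp_nonneg hp_row hμ_pos hrev hR_ne hR_two
    hpR_irr φstar hφ_pos μstar hμstar_pos hμstar_sum hqs hε
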